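/- arXiv:1308.4458 — 2 statements merged into one kernel-verified Lean document; each statement's English description precedes it below -/
import Mathlib

section
/- With the notation of the column-row-wise coded exposure setup, for every canonical basis vector e_i of ℂ^N (1 ≤ i ≤ N), every 1 ≤ v ≤ Ny and every 1 ≤ k ≤ K, the matrix Ḟ_v^k(e_i) factors as Ḟ_v^k(e_i) = (exp(−j·d_i·((v−1)·Nx·T − T − 1)) / √(Nx·Ny)) · D_{l,i} · R^k · D_{r,i}, where d_i = 2π(i−1)/N, D_{l,i} = diag(exp(−j·d_i·1), exp(−j·d_i·2), …, exp(−j·d_i·T)) is a T×T diagonal matrix, D_{r,i} = diag(exp(−j·d_i·T·1), exp(−j·d_i·T·2), …, exp(−j·d_i·T·Nx)) is an Nx×Nx diagonal matrix, and R^k = T^{−1/2}·[r_1^k, r_2^k, …, r_{Nx}^k] ∈ ℝ^{T×Nx} is the matrix whose u-th column is T^{−1/2}·(r_u^k(1),…,r_u^k(T))ᵀ. -/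
open Matrix Finset

namespace HFVcr

/-- The stacked index `m(t,u,v) = (v−1)·Nx·T + (u−1)·T + (t−1)` (with `0`-based
`Fin` indices) identifying the coordinates of `ℂ^N`, `N = T·Nx·Ny`, with triples. -/
def mIdx {T Nx Ny : ℕ} (p : Fin T × Fin Nx × Fin Ny) : ℕ :=
  p.2.2.val * Nx * T + p.2.1.val * T + p.1.val

/-- The unitary `N`-point DFT matrix, `N = T·Nx·Ny`, with both coordinates of `ℂ^N`
indexed by triples via the stacked index `mIdx`:
`Ψ(m,i) = N^{-1/2}·exp(−j·2π·(i−1)·m/N)`. -/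
noncomputable def dft (T Nx Ny : ℕ) :
    Matrix (Fin T × Fin Nx × Fin Ny) (Fin T × Fin Nx × Fin Ny) ℂ :=
  Matrix.of fun p q =>
    (1 / (Real.sqrt ((T : ℝ) * Nx * Ny) : ℂ)) *
      Complex.exp (-(Complex.I * (2 * (Real.pi : ℂ) * (mIdx q : ℕ) * (mIdx p : ℕ)) /
        ((T : ℂ) * Nx * Ny)))

/-- Squared Euclidean norm `‖f‖₂²` of a vector. -/
noncomputable def euclNormSq {ι : Type*} [Fintype ι] (f : ι → ℂ) : ℝ :=
  ∑ i, ‖f i‖ ^ 2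

/-- The submatrix `Ψ_{u,v} ∈ ℂ^{T×N}` of the DFT matrix formed by the rows
`m(t,u,v)`, `1 ≤ t ≤ T`. -/
noncomputable def Psiuv (T Nx Ny : ℕ) (u : Fin Nx) (v : Fin Ny) :
    Matrix (Fin T) (Fin T × Fin Nx × Fin Ny) ℂ :=
  Matrix.of fun t j => dft T Nx Ny (t, u, v) j

/-- `ḟ_{u,v}^k(x) = R_u^k · Ψ_{u,v} · x ∈ ℂ^T`. -/
noncomputable def fdot {T Nx Ny K : ℕ} (r : Fin Nx → Fin K → Fin T → ℝ)
    (u : Fin Nx) (v : Fin Ny) (k : Fin K) (x : Fin T × Fin Nx × Fin Ny → ℂ) :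
    Fin T → ℂ :=
  fun t => (r u k t : ℂ) * (Psiuv T Nx Ny u v *ᵥ x) t

/-- `Ḟ_v^k(x) ∈ ℂ^{T×Nx}`: the matrix whose `u`-th column is `ḟ_{u,v}^k(x)`. -/
noncomputable def Fvk {T Nx Ny K : ℕ} (r : Fin Nx → Fin K → Fin T → ℝ)
    (v : Fin Ny) (k : Fin K) (x : Fin T × Fin Nx × Fin Ny → ℂ) :
    Matrix (Fin T) (Fin Nx) ℂ :=
  Matrix.of fun t u => fdot r u v k x t

/-- `d_i = 2π(i−1)/N`, for the coordinate of `ℂ^N` indexed (via the stacked index)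
by the triple `i`. -/
noncomputable def dI (T Nx Ny : ℕ) (i : Fin T × Fin Nx × Fin Ny) : ℝ :=
  2 * Real.pi * (mIdx i : ℕ) / ((T : ℝ) * Nx * Ny)

/-- The random row-modulation matrix `R^k = T^{−1/2}·[r_1^k, …, r_{Nx}^k] ∈ ℝ^{T×Nx}`,
whose `u`-th column is `T^{−1/2}·(r_u^k(1),…,r_u^k(T))ᵀ`. -/
noncomputable def RkMat {T Nx K : ℕ} (r : Fin Nx → Fin K → Fin T → ℝ) (k : Fin K) :
    Matrix (Fin T) (Fin Nx) ℝ :=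
  Matrix.of fun t u => (1 / Real.sqrt T) * r u k t

/-- For every canonical basis vector `e_i` of `ℂ^N`, every `v` and
every `k`, the matrix `Ḟ_v^k(e_i)` factors as
`Ḟ_v^k(e_i) = (exp(−j·d_i·((v−1)·Nx·T − T − 1))/√(Nx·Ny)) · D_{l,i} · R^k · D_{r,i}`,
where `D_{l,i} = diag(exp(−j·d_i·1), …, exp(−j·d_i·T))` and
`D_{r,i} = diag(exp(−j·d_i·T·1), …, exp(−j·d_i·T·Nx))`. -/
theorem Fvk_single_eq (T Nx Ny K : ℕ) (hT : 0 < T) (hNx : 0 < Nx)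
    (hNy : 0 < Ny) (hK : 0 < K)
    (r : Fin Nx → Fin K → Fin T → ℝ)
    (hr : ∀ u k t, r u k t = 1 ∨ r u k t = -1)
    (i : Fin T × Fin Nx × Fin Ny) (v : Fin Ny) (k : Fin K) :
    Fvk r v k (Pi.single i 1) =
      (Complex.exp (-(Complex.I * ((dI T Nx Ny i : ℝ) : ℂ) *
            (((v.val * Nx * T : ℕ) : ℂ) - (T : ℂ) - 1))) /
          ((Real.sqrt ((Nx : ℝ) * Ny) : ℝ) : ℂ)) •
        (Matrix.diagonal (fun t : Fin T =>
            Complex.exp (-(Complex.I * ((dI T Nx Ny i : ℝ) : ℂ) * ((t.val + 1 : ℕ) : ℂ)))) *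
          (RkMat r k).map Complex.ofReal *
          Matrix.diagonal (fun u : Fin Nx =>
            Complex.exp (-(Complex.I * ((dI T Nx Ny i : ℝ) : ℂ) *
              ((T * (u.val + 1) : ℕ) : ℂ))))) := by
  have hTpos : (0:ℝ) < T := by exact_mod_cast hT
  have hsqrt : Real.sqrt ((T:ℝ) * Nx * Ny) = Real.sqrt T * Real.sqrt ((Nx:ℝ) * Ny) := by
    rw [mul_assoc, Real.sqrt_mul (Nat.cast_nonneg T)]
  ext t u
  simp only [Fvk, fdot, Psiuv, dft, RkMat, Matrix.of_apply, Matrix.mulVec,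
    dotProduct, Pi.single_apply, mul_ite, mul_one, mul_zero,
    Finset.sum_ite_eq', Finset.mem_univ, if_true, Matrix.smul_apply,
    Matrix.mul_diagonal, Matrix.diagonal_mul, Matrix.map_apply, smul_eq_mul]
  have hT' : (T:ℂ) ≠ 0 := Nat.cast_ne_zero.2 hT.ne'
  have hNx' : (Nx:ℂ) ≠ 0 := Nat.cast_ne_zero.2 hNx.ne'
  have hNy' : (Ny:ℂ) ≠ 0 := Nat.cast_ne_zero.2 hNy.ne'
  have h : Complex.exp (-(Complex.I * ((HFVcr.dI T Nx Ny i : ℝ) : ℂ) *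
        ((v.val : ℂ) * Nx * T - T - 1))) *
      (Complex.exp (-(Complex.I * ((HFVcr.dI T Nx Ny i : ℝ) : ℂ) * ((t.val : ℂ) + 1))) *
       Complex.exp (-(Complex.I * ((HFVcr.dI T Nx Ny i : ℝ) : ℂ) *
        ((T : ℂ) * ((u.val : ℂ) + 1))))) =
      Complex.exp (-(Complex.I * (2 * (Real.pi : ℂ) * (mIdx i : ℂ) * (mIdx (t,u,v) : ℂ)) /
        ((T:ℂ)*Nx*Ny))) := by
    rw [← Complex.exp_add, ← Complex.exp_add]
    congr 1
    simp only [HFVcr.dI, HFVcr.mIdx]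
    push_cast
    ring
  rw [hsqrt]
  push_cast
  linear_combination (-((r u k t : ℝ) : ℂ) /
    (((Real.sqrt (T:ℝ) : ℝ) : ℂ) * ((Real.sqrt ((Nx:ℝ)*(Ny:ℝ)) : ℝ) : ℂ))) * h

end HFVcr
end

section
/- With the notation of the column-row-wise coded exposure setup, let S be a positive integer and let Ω_S = { x ∈ ℂ^N : ‖x‖₀ ≤ S and ‖x‖₂ = 1 }. Then for every fixed choice of signs r_u^k(t) ∈ {−1,+1} and every x ∈ Ω_S, the spectral norm of the block-diagonal matrix satisfies ‖Ḟ(x)‖₂ ≤ √(S/M)·max_{1≤k≤K} ‖R^k‖₂, where R^k = T^{−1/2}·[r_1^k, r_2^k, …, r_{Nx}^k] ∈ ℝ^{T×Nx} is the matrix whose u-th column is T^{−1/2}·(r_u^k(1),…,r_u^k(T))ᵀ. -/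
/-! Since `Ḟ` is additive in `x`, the triangle inequality reduces the bound to one-sparse vectors
`c·e_q`, and Cauchy–Schwarz then gives `∑_q |x_q| ≤ √S·‖x‖₂`. For `c·e_q`, the DFT phase of the
stacked index `m(t,u,v) = v·Nx·T + u·T + t` splits into the product of the phases of its three
summands, so `Ḟ_v^k(c·e_q) = c·e^{iφ}/√(Nx·Ny) · D₁·R^k·D₂` with unimodular diagonal `D₁`, `D₂`.
Every block of `Ḟ(c·e_q)` therefore has spectral norm at most `|c|·‖R^k‖₂/√(Nx·Ny)`, and so has the
block-diagonal matrix. -/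

open Matrix Finset

namespace HFVcr

/-- `Ḟ(x) = K^{−1/2}·blockdiag((Ḟ_v^k(x))^*) ∈ ℂ^{M×K·T·Ny}`, with blocks indexed
by the pairs `(v,k)`. -/
noncomputable def Fdot {T Nx Ny K : ℕ} (r : Fin Nx → Fin K → Fin T → ℝ)
    (x : Fin T × Fin Nx × Fin Ny → ℂ) :
    Matrix (Fin Nx × (Fin Ny × Fin K)) (Fin T × (Fin Ny × Fin K)) ℂ :=
  (((1 / Real.sqrt K : ℝ) : ℂ)) •
    Matrix.blockDiagonal (fun vk : Fin Ny × Fin K => (Fvk r vk.1 vk.2 x)ᴴ)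


/-- The spectral norm (largest singular value) of a matrix: the operator norm of the
induced linear map between Euclidean spaces. -/
noncomputable def specNorm {m n : Type*} [Fintype m] [Fintype n] [DecidableEq n]
    (A : Matrix m n ℂ) : ℝ :=
  ‖LinearMap.toContinuousLinearMap (Matrix.toEuclideanLin A)‖

end HFVcr

open scoped Matrix.Norms.L2Operator

namespace Matrix

variable {𝕜 α m n : Type*} [RCLike 𝕜] [Fintype α] [Fintype n]

lemma l2_opNorm_le_of_sum_sq_mulVec_le [Fintype m] [DecidableEq n] (A : Matrix m n 𝕜) {C : ℝ}
    (hC : 0 ≤ C) (h : ∀ w : n → 𝕜, ∑ i, ‖(A *ᵥ w) i‖ ^ 2 ≤ C ^ 2 * ∑ j, ‖w j‖ ^ 2) :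
    ‖A‖ ≤ C := by
  rw [l2_opNorm_def]
  refine ContinuousLinearMap.opNorm_le_bound _ hC fun w => ?_
  refine (sq_le_sq₀ (norm_nonneg _) (by positivity)).mp ?_
  simpa [EuclideanSpace.norm_sq_eq, mul_pow] using h w

lemma sum_sq_mulVec_le [Fintype m] [DecidableEq n] (A : Matrix m n 𝕜) (w : n → 𝕜) :
    ∑ i, ‖(A *ᵥ w) i‖ ^ 2 ≤ ‖A‖ ^ 2 * ∑ j, ‖w j‖ ^ 2 := by
  have h := pow_le_pow_left₀ (norm_nonneg _) (A.l2_opNorm_mulVec (WithLp.toLp 2 w)) 2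
  simpa [EuclideanSpace.norm_sq_eq, mul_pow] using h

lemma blockDiagonal_mulVec_apply [DecidableEq α] (M : α → Matrix m n 𝕜)
    (w : n × α → 𝕜) (i : m) (a : α) :
    (blockDiagonal M *ᵥ w) (i, a) = (M a *ᵥ fun j => w (j, a)) i := by
  simp [mulVec, dotProduct, Fintype.sum_prod_type, blockDiagonal_apply]

lemma l2_opNorm_blockDiagonal_le [Fintype m] [DecidableEq α] [DecidableEq n]
    (M : α → Matrix m n 𝕜) {C : ℝ} (hC : 0 ≤ C) (h : ∀ a, ‖M a‖ ≤ C) :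
    ‖blockDiagonal M‖ ≤ C := by
  refine l2_opNorm_le_of_sum_sq_mulVec_le _ hC fun w => ?_
  simp only [Fintype.sum_prod_type_right, blockDiagonal_mulVec_apply]
  rw [Finset.mul_sum]
  gcongr with a
  exact (sum_sq_mulVec_le _ _).trans (by gcongr; exact h a)

lemma l2_opNorm_diagonal_mul_mul_diagonal_le [Fintype m] [DecidableEq m] [DecidableEq n]
    (d : m → 𝕜) (e : n → 𝕜) (A : Matrix m n 𝕜) (hd : ∀ i, ‖d i‖ ≤ 1) (he : ∀ j, ‖e j‖ ≤ 1) :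
    ‖diagonal d * A * diagonal e‖ ≤ ‖A‖ := by
  have hd' : ‖diagonal d‖ ≤ 1 := by
    rw [l2_opNorm_diagonal]
    exact (pi_norm_le_iff_of_nonneg zero_le_one).mpr hd
  have he' : ‖diagonal e‖ ≤ 1 := by
    rw [l2_opNorm_diagonal]
    exact (pi_norm_le_iff_of_nonneg zero_le_one).mpr he
  calc ‖diagonal d * A * diagonal e‖ ≤ ‖diagonal d‖ * ‖A‖ * ‖diagonal e‖ :=
        (l2_opNorm_mul _ _).trans (by gcongr; exact l2_opNorm_mul _ _)
    _ ≤ 1 * ‖A‖ * 1 := by gcongr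
    _ = ‖A‖ := by ring

end Matrix

section Sparse

variable {ι G E : Type*} [Fintype ι] [NormedAddCommGroup G] [SeminormedAddCommGroup E]

lemma sum_norm_le_sqrt_ncard_support_mul_sqrt (x : ι → G) :
    ∑ i, ‖x i‖ ≤ √(Function.support x).ncard * √(∑ i, ‖x i‖ ^ 2) := by
  classical
  set s := Finset.univ.filter fun i => x i ≠ 0
  have hs : (Function.support x).ncard = s.card := by
    rw [← Set.ncard_coe_finset]
    congr
    ext
    simp [s]
  calc ∑ i, ‖x i‖ = ∑ i ∈ s, 1 * ‖x i‖ := by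
        rw [Finset.sum_filter_of_ne fun i _ hi => by simpa using hi]
        simp
    _ ≤ √(∑ i ∈ s, 1 ^ 2) * √(∑ i ∈ s, ‖x i‖ ^ 2) := Real.sum_mul_le_sqrt_mul_sqrt _ _ _
    _ ≤ √(Function.support x).ncard * √(∑ i, ‖x i‖ ^ 2) := by
        rw [hs]
        gcongr
        · simp
        · exact Finset.subset_univ s

lemma AddMonoidHom.norm_apply_le_of_norm_apply_single_le [DecidableEq ι] (F : (ι → G) →+ E)
    {a : ℝ} (ha : 0 ≤ a) (h : ∀ i c, ‖F (Pi.single i c)‖ ≤ a * ‖c‖) (x : ι → G) :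
    ‖F x‖ ≤ a * √(Function.support x).ncard * √(∑ i, ‖x i‖ ^ 2) := by
  calc ‖F x‖ = ‖∑ i, F (Pi.single i (x i))‖ := by rw [← map_sum, Finset.univ_sum_single]
    _ ≤ ∑ i, a * ‖x i‖ := (norm_sum_le _ _).trans (Finset.sum_le_sum fun i _ => h i (x i))
    _ ≤ a * √(Function.support x).ncard * √(∑ i, ‖x i‖ ^ 2) := by
        rw [← Finset.mul_sum, mul_assoc]
        exact mul_le_mul_of_nonneg_left (sum_norm_le_sqrt_ncard_support_mul_sqrt x) ha

end Sparse

namespace HFVcr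

lemma specNorm_eq_l2_opNorm {m n : Type*} [Fintype m] [Fintype n] [DecidableEq n]
    (A : Matrix m n ℂ) : specNorm A = ‖A‖ :=
  rfl

variable {T Nx Ny K : ℕ} (r : Fin Nx → Fin K → Fin T → ℝ)

noncomputable def dftPhase (q : Fin T × Fin Nx × Fin Ny) (n : ℕ) : ℂ :=
  Complex.exp (-(Complex.I * (2 * (Real.pi : ℂ) * (mIdx q : ℕ) * n) / ((T : ℂ) * Nx * Ny)))

lemma dft_apply (p q : Fin T × Fin Nx × Fin Ny) :
    dft T Nx Ny p q = (1 / (√((T : ℝ) * Nx * Ny) : ℂ)) * dftPhase q (mIdx p) :=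
  rfl

lemma dftPhase_add (q : Fin T × Fin Nx × Fin Ny) (m n : ℕ) :
    dftPhase q (m + n) = dftPhase q m * dftPhase q n := by
  rw [dftPhase, dftPhase, dftPhase, ← Complex.exp_add]
  congr 1
  push_cast
  ring

lemma norm_dftPhase (q : Fin T × Fin Nx × Fin Ny) (n : ℕ) : ‖dftPhase q n‖ = 1 := by
  have : -(Complex.I * (2 * (Real.pi : ℂ) * (mIdx q : ℕ) * n) / ((T : ℂ) * Nx * Ny)) =
      ((-(2 * Real.pi * mIdx q * n / (T * Nx * Ny)) : ℝ) : ℂ) * Complex.I := by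
    push_cast
    ring
  rw [dftPhase, this, Complex.norm_exp_ofReal_mul_I]

lemma Fvk_single (v : Fin Ny) (k : Fin K) (q : Fin T × Fin Nx × Fin Ny) (c : ℂ) :
    Fvk r v k (Pi.single q c) =
      (c * dftPhase q (v * Nx * T) / (√((Nx : ℝ) * Ny) : ℂ)) •
        (diagonal (fun t : Fin T => dftPhase q t) * (RkMat r k).map Complex.ofReal *
          diagonal (fun u : Fin Nx => dftPhase q (u * T))) := by
  have hsqrt : √((T : ℝ) * Nx * Ny) = √(T : ℝ) * √((Nx : ℝ) * Ny) := by
    rw [mul_assoc, Real.sqrt_mul (Nat.cast_nonneg T)]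
  ext t u
  simp only [Fvk, fdot, Psiuv, of_apply, mulVec_single, Matrix.smul_apply, Pi.smul_apply,
    op_smul_eq_mul, mul_diagonal, diagonal_mul, map_apply, RkMat, smul_eq_mul, col_apply,
    dft_apply, mIdx, dftPhase_add, hsqrt]
  push_cast
  ring

lemma norm_Fvk_single_le (v : Fin Ny) (k : Fin K) (q : Fin T × Fin Nx × Fin Ny) (c : ℂ) :
    ‖Fvk r v k (Pi.single q c)‖ ≤ ‖c‖ / √((Nx : ℝ) * Ny) * ‖(RkMat r k).map Complex.ofReal‖ := by
  have hz : ‖c * dftPhase q (v * Nx * T) / (√((Nx : ℝ) * Ny) : ℂ)‖ = ‖c‖ / √((Nx : ℝ) * Ny) := by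
    rw [norm_div, norm_mul, norm_dftPhase, mul_one, Complex.norm_real, Real.norm_of_nonneg
      (Real.sqrt_nonneg _)]
  rw [Fvk_single, norm_smul, hz]
  gcongr
  exact l2_opNorm_diagonal_mul_mul_diagonal_le _ _ _ (fun _ => (norm_dftPhase q _).le)
    fun _ => (norm_dftPhase q _).le

lemma norm_Fdot_single_le (q : Fin T × Fin Nx × Fin Ny) (c : ℂ) :
    ‖Fdot r (Pi.single q c)‖ ≤
      (⨆ k, ‖(RkMat r k).map Complex.ofReal‖) / √((K * Nx * Ny : ℕ) : ℝ) * ‖c‖ := by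
  set C := ⨆ k, ‖(RkMat r k).map Complex.ofReal‖
  have hC : 0 ≤ C := Real.iSup_nonneg fun _ => norm_nonneg _
  have hblock : ‖blockDiagonal fun vk : Fin Ny × Fin K => (Fvk r vk.1 vk.2 (Pi.single q c))ᴴ‖
      ≤ ‖c‖ / √((Nx : ℝ) * Ny) * C := by
    refine l2_opNorm_blockDiagonal_le _ (by positivity) fun ⟨v, k⟩ => ?_
    rw [l2_opNorm_conjTranspose]
    refine (norm_Fvk_single_le r v k q c).trans ?_
    gcongr
    exact le_ciSup (f := fun k => ‖(RkMat r k).map Complex.ofReal‖) (Set.finite_range _).bddAbove k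
  have hsqrt : √((K * Nx * Ny : ℕ) : ℝ) = √(K : ℝ) * √((Nx : ℝ) * Ny) := by
    push_cast
    rw [mul_assoc, Real.sqrt_mul (Nat.cast_nonneg K)]
  calc ‖Fdot r (Pi.single q c)‖ ≤ 1 / √(K : ℝ) * (‖c‖ / √((Nx : ℝ) * Ny) * C) := by
        rw [Fdot, norm_smul, Complex.norm_real, Real.norm_of_nonneg (by positivity)]
        gcongr
    _ = C / √((K * Nx * Ny : ℕ) : ℝ) * ‖c‖ := by
        rw [hsqrt]
        ring

lemma Fvk_add (v : Fin Ny) (k : Fin K) (x y : Fin T × Fin Nx × Fin Ny → ℂ) :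
    Fvk r v k (x + y) = Fvk r v k x + Fvk r v k y := by
  ext t u
  simp only [Fvk, fdot, of_apply, Matrix.add_apply, mulVec_add, Pi.add_apply, mul_add]

lemma Fdot_add (x y : Fin T × Fin Nx × Fin Ny → ℂ) : Fdot r (x + y) = Fdot r x + Fdot r y := by
  rw [Fdot, Fdot, Fdot, ← smul_add, ← blockDiagonal_add]
  congr with vk : 1
  rw [Pi.add_apply, Fvk_add, conjTranspose_add]

theorem specNorm_Fdot_sparse_le_general (T Nx Ny K S : ℕ)
    (r : Fin Nx → Fin K → Fin T → ℝ)
    (x : Fin T × Fin Nx × Fin Ny → ℂ)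
    (hx0 : (Function.support x).ncard ≤ S)
    (hx2 : Real.sqrt (euclNormSq x) = 1) :
    specNorm (Fdot r x) ≤
      Real.sqrt ((S : ℝ) / ((K * Nx * Ny : ℕ) : ℝ)) *
        ⨆ k : Fin K, specNorm ((RkMat r k).map Complex.ofReal) := by
  simp only [specNorm_eq_l2_opNorm]
  set C := ⨆ k : Fin K, ‖(RkMat r k).map Complex.ofReal‖
  have hC : 0 ≤ C / √((K * Nx * Ny : ℕ) : ℝ) :=
    div_nonneg (Real.iSup_nonneg fun _ => norm_nonneg _) (Real.sqrt_nonneg _)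
  have hsparse := (AddMonoidHom.mk' (Fdot r) (Fdot_add r)).norm_apply_le_of_norm_apply_single_le
    hC (norm_Fdot_single_le r) x
  calc ‖Fdot r x‖ ≤ C / √((K * Nx * Ny : ℕ) : ℝ) * √(S : ℝ) * 1 := by
        rw [← hx2, euclNormSq]
        exact hsparse.trans (by gcongr)
    _ = √((S : ℝ) / ((K * Nx * Ny : ℕ) : ℝ)) * C := by
        rw [Real.sqrt_div' _ (Nat.cast_nonneg _)]
        ring

/-- For every fixed choice of signs `r_u^k(t) ∈ {−1,+1}` and every
`x ∈ Ω_S = {x ∈ ℂ^N : ‖x‖₀ ≤ S, ‖x‖₂ = 1}`,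
`‖Ḟ(x)‖₂ ≤ √(S/M)·max_{1≤k≤K} ‖R^k‖₂`, where `M = K·Nx·Ny`. -/
theorem specNorm_Fdot_sparse_le (T Nx Ny K S : ℕ) (hT : 0 < T) (hNx : 0 < Nx)
    (hNy : 0 < Ny) (hK : 0 < K) (hS : 0 < S)
    (r : Fin Nx → Fin K → Fin T → ℝ)
    (hr : ∀ u k t, r u k t = 1 ∨ r u k t = -1)
    (x : Fin T × Fin Nx × Fin Ny → ℂ)
    (hx0 : (Function.support x).ncard ≤ S)
    (hx2 : Real.sqrt (euclNormSq x) = 1) :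
    specNorm (Fdot r x) ≤
      Real.sqrt ((S : ℝ) / ((K * Nx * Ny : ℕ) : ℝ)) *
        ⨆ k : Fin K, specNorm ((RkMat r k).map Complex.ofReal) :=
  specNorm_Fdot_sparse_le_general T Nx Ny K S r x hx0 hx2

end HFVcr
end
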